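/- Let Ω and Θ be finite sets with |Ω| ≥ 3 and |Θ| ≥ 2. Let f : Δ(Ω) → Δ(Ω) and, for each ω ∈ Ω, g_ω : Δ(Θ) → ℝ₊^Θ be given. Then f and all g_ω are positive and continuous and the pair (f, g) is Gretherian-coherent if and only if there exist ψ : Ω → ℝ₊₊, γ : Θ → ℝ₊₊, and α > 0 such that f(p)(ω) = ψ(ω)·p(ω)^α / Σ_{ω'} ψ(ω')·p(ω')^α for all p ∈ Δ(Ω) and ω ∈ Ω, and g_ω(σ(·|ω))(θ) = γ(θ)·σ(θ|ω)^α for all ω ∈ Ω, all Blackwell experiments σ, and all θ ∈ Θ. -/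

import Mathlib

/-!
Under the uniform prior, an experiment whose signal law is the same in every state leaves the
prior unchanged, so coherence forces `g ω s θ` not to depend on `ω`. Binary experiments that put
mass `t ω ∈ (0, 1]` on a fixed signal `θ₀` turn coherence into `f (t / ∑ t) ∝ ψ · φ ∘ t`, with
`ψ = f uniform` and `φ x = g (x on θ₀) θ₀`. As `t` and `x • t` normalize to the same prior,
`φ (x y) φ 1 = φ x φ y`; continuity solves this Cauchy equation as `φ x = φ 1 · x ^ α`, and
`φ 0 = 0` forces `α > 0`. This gives the formula for `f` at interior priors, continuity extends it
to the whole simplex, and the experiment sending `s` in one state and uninformative signals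
elsewhere identifies `g`. Conversely, both sides of the coherence identity for the power
distortions are the normalization of `ψ · (p · σ(θ|·)) ^ α`.
-/
open Finset

/-- `p` is a probability distribution on the finite set `Ω`. -/
def IsDist {Ω : Type*} [Fintype Ω] (p : Ω → ℝ) : Prop :=
  (∀ ω, 0 ≤ p ω) ∧ ∑ ω, p ω = 1

/-- The Bayesian posterior of `p` given signal realization `θ` and Blackwell
experiment `σ : Ω → Δ(Θ)`: `B_σ(p,θ)(ω) = p(ω)σ(θ|ω)/Σ_{ω'} p(ω')σ(θ|ω')`. -/
noncomputable def bayes {Ω Θ : Type*} [Fintype Ω]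
    (σ : Ω → Θ → ℝ) (p : Ω → ℝ) (θ : Θ) : Ω → ℝ :=
  fun ω => p ω * σ ω θ / ∑ ω', p ω' * σ ω' θ

/-- The pair `(f, g)` is Gretherian-coherent: distorting the prior and the signal and
then updating coincides with Bayesian updating followed by distortion of the
posterior, whenever the relevant denominators are positive. -/
def GretherCoherent {Ω Θ : Type*} [Fintype Ω] [Fintype Θ]
    (f : (Ω → ℝ) → Ω → ℝ) (g : Ω → (Θ → ℝ) → Θ → ℝ) : Prop :=
  ∀ p : Ω → ℝ, IsDist p → ∀ σ : Ω → Θ → ℝ, (∀ ω, IsDist (σ ω)) → ∀ θ : Θ,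
    0 < ∑ ω', p ω' * σ ω' θ → 0 < ∑ ω', f p ω' * g ω' (σ ω') θ →
    ∀ ω : Ω, f (bayes σ p θ) ω =
      f p ω * g ω (σ ω) θ / ∑ ω', f p ω' * g ω' (σ ω') θ

open Set Filter Topology Real
open scoped NNReal

theorem AddMonoidHom.apply_eq_mul_apply_one_of_continuous (L : ℝ≥0 →+ ℝ) (hL : Continuous L)
    (u : ℝ≥0) : L u = u * L 1 := by
  have key : (fun x : ℝ => L x.toNNReal) = fun x => (x.toNNReal : ℝ) * L 1 := by
    refine Rat.denseRange_cast.equalizer (by fun_prop) (by fun_prop) (funext fun q => ?_)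
    have hq : (q : ℝ).toNNReal = ((q.toNNRat : ℚ≥0) : ℝ≥0) := by
      ext
      change max (q : ℝ) 0 = ((q.toNNRat : ℚ≥0) : ℝ)
      rw [← Rat.cast_nnratCast]
      simp [Rat.toNNRat]
    have h := map_nnratCast_smul L ℝ≥0 ℝ q.toNNRat 1
    rw [smul_eq_mul, smul_eq_mul, mul_one] at h
    simp only [Function.comp_apply, hq]
    exact h
  simpa using congr_fun key u

theorem exists_rpow_of_mul_eq_mul {Φ : ℝ → ℝ} (hc : ContinuousOn Φ (Ioc 0 1))
    (hpos : ∀ x ∈ Ioc (0 : ℝ) 1, 0 < Φ x)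
    (hmul : ∀ x ∈ Ioc (0 : ℝ) 1, ∀ y ∈ Ioc (0 : ℝ) 1, Φ (x * y) * Φ 1 = Φ x * Φ y) :
    ∃ α : ℝ, ∀ x ∈ Ioc (0 : ℝ) 1, Φ x = Φ 1 * x ^ α := by
  have hexp (u : ℝ≥0) : exp (-u) ∈ Ioc (0 : ℝ) 1 :=
    ⟨exp_pos _, exp_le_one_iff.2 (neg_nonpos.2 u.2)⟩
  have hΦ1 : 0 < Φ 1 := hpos 1 ⟨one_pos, le_rfl⟩
  -- The substitution `x = e⁻ᵘ` turns the multiplicative equation into Cauchy's additive one.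
  set ℓ : ℝ≥0 → ℝ := fun u => log (Φ (exp (-u))) - log (Φ 1) with hℓ
  have hadd (u v : ℝ≥0) : ℓ (u + v) = ℓ u + ℓ v := by
    have h := congrArg log (hmul _ (hexp u) _ (hexp v))
    rw [← exp_add, ← neg_add, ← NNReal.coe_add, log_mul (hpos _ (hexp (u + v))).ne' hΦ1.ne',
      log_mul (hpos _ (hexp u)).ne' (hpos _ (hexp v)).ne'] at h
    simp only [hℓ]
    linarith
  have hcont : Continuous ℓ := by
    have hΦ : Continuous fun u : ℝ≥0 => Φ (exp (-u)) :=
      hc.comp_continuous (by fun_prop) hexp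
    exact (hΦ.log fun u => (hpos _ (hexp u)).ne').sub continuous_const
  have hlin := (AddMonoidHom.mk' ℓ hadd).apply_eq_mul_apply_one_of_continuous hcont
  refine ⟨-ℓ 1, fun x hx => ?_⟩
  let u : ℝ≥0 := ⟨-log x, neg_nonneg.2 (log_nonpos hx.1.le hx.2)⟩
  have hu : exp (-u) = x := by rw [show (u : ℝ) = -log x from rfl, neg_neg, exp_log hx.1]
  have h : ℓ u = -log x * ℓ 1 := hlin u
  rw [hℓ] at h
  simp only [hu] at h
  rw [rpow_def_of_pos hx.1, ← exp_log (hpos x hx), ← exp_log hΦ1, ← exp_add]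
  congr 1
  linarith

theorem exists_pos_rpow_of_mul_eq_mul {Φ : ℝ → ℝ} (hc : ContinuousOn Φ (Icc 0 1))
    (hpos : ∀ x ∈ Ioc (0 : ℝ) 1, 0 < Φ x) (h0 : Φ 0 = 0)
    (hmul : ∀ x ∈ Ioc (0 : ℝ) 1, ∀ y ∈ Ioc (0 : ℝ) 1, Φ (x * y) * Φ 1 = Φ x * Φ y) :
    ∃ α : ℝ, 0 < α ∧ ∀ x ∈ Ioc (0 : ℝ) 1, Φ x = Φ 1 * x ^ α := by
  obtain ⟨α, hα⟩ := exists_rpow_of_mul_eq_mul (hc.mono Ioc_subset_Icc_self) hpos hmul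
  refine ⟨α, ?_, hα⟩
  by_contra! hα0
  -- With `α ≤ 0` we would get `Φ ≥ Φ 1 > 0` near `0`, against `Φ 0 = 0`.
  have hlim : Tendsto Φ (𝓝[Ioc 0 1] 0) (𝓝 0) := by
    have h := ((hc 0 ⟨le_rfl, zero_le_one⟩).mono Ioc_subset_Icc_self).tendsto
    rwa [h0] at h
  have hge : ∀ᶠ x in 𝓝[Ioc 0 1] 0, Φ 1 ≤ Φ x := eventually_nhdsWithin_of_forall fun x hx => by
    rw [hα x hx]
    exact le_mul_of_one_le_right (hpos 1 ⟨one_pos, le_rfl⟩).le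
      (one_le_rpow_of_pos_of_le_one_of_nonpos hx.1 hx.2 hα0)
  have := left_nhdsWithin_Ioc_neBot (zero_lt_one' ℝ)
  linarith [ge_of_tendsto hlim hge, hpos 1 ⟨one_pos, le_rfl⟩]

section Distributions

variable {Ω : Type*} [Fintype Ω]

noncomputable def normalized (a : Ω → ℝ) : Ω → ℝ := fun ω => a ω / ∑ ω', a ω'

theorem normalized_eq_of_eq_mul {a b : Ω → ℝ} {c : ℝ} (hc : c ≠ 0) (h : ∀ ω, b ω = c * a ω) :
    normalized b = normalized a := by
  funext ω
  simp only [normalized, h, ← Finset.mul_sum]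
  exact mul_div_mul_left _ _ hc

theorem normalized_eq_self {a : Ω → ℝ} (h : ∑ ω, a ω = 1) : normalized a = a := by
  funext ω
  simp [normalized, h]

theorem mul_eq_mul_of_normalized_eq {a b : Ω → ℝ} (h : normalized a = normalized b)
    (ha : ∑ ω, a ω ≠ 0) (hb : ∑ ω, b ω ≠ 0) (i j : Ω) : a i * b j = a j * b i := by
  have hi := congrFun h i
  have hj := congrFun h j
  simp only [normalized] at hi hj
  rw [div_eq_div_iff ha hb] at hi hj
  exact mul_right_cancel₀ ha (by linear_combination a j * hi - a i * hj)

theorem isDist_normalized {a : Ω → ℝ} (ha : ∀ ω, 0 ≤ a ω) (hs : 0 < ∑ ω, a ω) :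
    IsDist (normalized a) :=
  ⟨fun ω => div_nonneg (ha ω) hs.le, by simp only [normalized, ← Finset.sum_div, div_self hs.ne']⟩

theorem IsDist.exists_pos {p : Ω → ℝ} (hp : IsDist p) : ∃ ω, 0 < p ω := by
  by_contra! h
  have hz : ∑ ω, p ω = 0 := Finset.sum_eq_zero fun ω _ => le_antisymm (h ω) (hp.1 ω)
  exact zero_ne_one (hz.symm.trans hp.2)

theorem IsDist.le_one {p : Ω → ℝ} (hp : IsDist p) (ω : Ω) : p ω ≤ 1 :=
  hp.2 ▸ Finset.single_le_sum (fun i _ => hp.1 i) (Finset.mem_univ ω)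

theorem bayes_eq_normalized {Θ : Type*} (σ : Ω → Θ → ℝ) (p : Ω → ℝ) (θ : Θ) :
    bayes σ p θ = normalized fun ω => p ω * σ ω θ :=
  rfl

variable (Ω) in
noncomputable def uniformDist : Ω → ℝ := fun _ => (Fintype.card Ω : ℝ)⁻¹

theorem uniformDist_pos [Nonempty Ω] (ω : Ω) : 0 < uniformDist Ω ω :=
  inv_pos.2 (Nat.cast_pos.2 Fintype.card_pos)

theorem isDist_uniformDist [Nonempty Ω] : IsDist (uniformDist Ω) :=
  ⟨fun ω => (uniformDist_pos ω).le, by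
    simp [uniformDist, Finset.card_univ, (Nat.cast_pos.2 (Fintype.card_pos (α := Ω))).ne']⟩

theorem normalized_const [Nonempty Ω] {c : ℝ} (hc : c ≠ 0) :
    normalized (fun _ : Ω => c) = uniformDist Ω := by
  have hn : (Fintype.card Ω : ℝ) ≠ 0 := Nat.cast_ne_zero.2 Fintype.card_ne_zero
  rw [normalized_eq_of_eq_mul (a := uniformDist Ω) (mul_ne_zero hc hn)
    (fun _ => by simp [uniformDist, hn]), normalized_eq_self isDist_uniformDist.2]

theorem bayes_uniformDist [Nonempty Ω] {Θ : Type*} (σ : Ω → Θ → ℝ) (θ : Θ) :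
    bayes σ (uniformDist Ω) θ = normalized fun ω => σ ω θ :=
  normalized_eq_of_eq_mul (uniformDist_pos (Classical.arbitrary Ω)).ne' fun _ => rfl

theorem isDist_subset_closure_pos [Nonempty Ω] :
    {p : Ω → ℝ | IsDist p} ⊆ closure {p | IsDist p ∧ ∀ ω, 0 < p ω} := by
  intro p hp
  let c : ℝ → Ω → ℝ := fun ε => (1 - ε) • p + ε • uniformDist Ω
  have hc : Tendsto c (𝓝[>] 0) (𝓝 p) :=
    ((by fun_prop : Continuous c).tendsto' 0 p (by simp [c])).mono_left nhdsWithin_le_nhds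
  refine mem_closure_of_tendsto hc (eventually_of_mem (Ioo_mem_nhdsGT one_pos) fun ε hε => ?_)
  have hpos (ω : Ω) : 0 < c ε ω := by
    simp only [c, Pi.add_apply, Pi.smul_apply, smul_eq_mul]
    nlinarith [hp.1 ω, uniformDist_pos ω, hε.1, hε.2]
  refine ⟨⟨fun ω => (hpos ω).le, ?_⟩, hpos⟩
  simp only [c, Pi.add_apply, Pi.smul_apply, smul_eq_mul, Finset.sum_add_distrib,
    ← Finset.mul_sum, hp.2, isDist_uniformDist.2]
  ring

theorem IsDist.eq_of_continuousOn_of_pos [Nonempty Ω] {X : Type*} [TopologicalSpace X]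
    [T2Space X] {F G : (Ω → ℝ) → X} {p : Ω → ℝ} (hp : IsDist p)
    (hF : ContinuousOn F {p | IsDist p}) (hG : ContinuousOn G {p | IsDist p})
    (h : ∀ q, IsDist q → (∀ ω, 0 < q ω) → F q = G q) : F p = G p :=
  Set.EqOn.of_subset_closure (fun q hq => h q hq.1 hq.2) hF hG (fun _ hq => hq.1)
    isDist_subset_closure_pos hp

end Distributions

noncomputable def powerSignal {Θ : Type*} (γ : Θ → ℝ) (α : ℝ) (s : Θ → ℝ) : Θ → ℝ :=
  fun θ => γ θ * s θ ^ α

theorem continuous_powerSignal {Θ : Type*} (γ : Θ → ℝ) {α : ℝ} (hα : 0 ≤ α) :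
    Continuous (powerSignal γ α) :=
  continuous_pi fun θ => continuous_const.mul
    ((continuous_rpow_const hα).comp (continuous_apply θ))

section PowerDistortion

variable {Ω Θ : Type*} [Fintype Ω] [Fintype Θ]

noncomputable def powerDistortion (ψ : Ω → ℝ) (α : ℝ) (p : Ω → ℝ) : Ω → ℝ :=
  normalized fun ω => ψ ω * p ω ^ α

theorem sum_mul_rpow_pos {ψ p : Ω → ℝ} (hψ : ∀ ω, 0 < ψ ω) (hp : IsDist p) (α : ℝ) :
    0 < ∑ ω, ψ ω * p ω ^ α := by
  obtain ⟨ω, hω⟩ := hp.exists_pos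
  exact Finset.sum_pos' (fun i _ => mul_nonneg (hψ i).le (rpow_nonneg (hp.1 i) α))
    ⟨ω, Finset.mem_univ ω, mul_pos (hψ ω) (rpow_pos_of_pos hω α)⟩

theorem powerDistortion_eq_zero_iff {ψ p : Ω → ℝ} {α : ℝ} (hψ : ∀ ω, 0 < ψ ω) (hα : 0 < α)
    (hp : IsDist p) (ω : Ω) : powerDistortion ψ α p ω = 0 ↔ p ω = 0 := by
  simp [powerDistortion, normalized, (sum_mul_rpow_pos hψ hp α).ne', (hψ ω).ne',
    rpow_eq_zero (hp.1 ω) hα.ne']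

theorem continuousOn_powerDistortion {ψ : Ω → ℝ} {α : ℝ} (hψ : ∀ ω, 0 < ψ ω) (hα : 0 ≤ α) :
    ContinuousOn (powerDistortion ψ α) {p | IsDist p} := by
  have hterm (ω : Ω) : Continuous fun p : Ω → ℝ => ψ ω * p ω ^ α :=
    continuous_const.mul ((continuous_rpow_const hα).comp (continuous_apply ω))
  refine continuousOn_pi.2 fun ω => ContinuousOn.div (hterm ω).continuousOn
    (continuous_finsetSum _ fun ω _ => hterm ω).continuousOn fun p hp => ?_
  exact (sum_mul_rpow_pos hψ hp α).ne'

theorem powerDistortion_normalized (ψ : Ω → ℝ) (α : ℝ) {a : Ω → ℝ} (ha : ∀ ω, 0 ≤ a ω)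
    (hs : 0 < ∑ ω, a ω) :
    powerDistortion ψ α (normalized a) = normalized fun ω => ψ ω * a ω ^ α := by
  refine normalized_eq_of_eq_mul (inv_ne_zero (rpow_pos_of_pos hs α).ne') fun ω => ?_
  rw [normalized, div_rpow (ha ω) hs.le]
  ring

theorem powerSignal_eq_zero_iff {γ s : Θ → ℝ} {α : ℝ} (hγ : ∀ θ, 0 < γ θ) (hα : 0 < α)
    (hs : IsDist s) (θ : Θ) : powerSignal γ α s θ = 0 ↔ s θ = 0 := by
  simp [powerSignal, (hγ θ).ne', rpow_eq_zero (hs.1 θ) hα.ne']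

theorem gretherCoherent_powerDistortion (ψ : Ω → ℝ) (γ : Θ → ℝ) (α : ℝ) :
    GretherCoherent (powerDistortion ψ α) fun _ => powerSignal γ α := by
  intro p hp σ hσ θ hS hZ ω
  set C := ∑ ω, ψ ω * p ω ^ α
  have hterm (ω : Ω) : powerDistortion ψ α p ω * powerSignal γ α (σ ω) θ =
      γ θ / C * (ψ ω * (p ω * σ ω θ) ^ α) := by
    rw [powerDistortion, powerSignal, normalized, mul_rpow (hp.1 ω) ((hσ ω).1 θ)]
    ring
  have hc : γ θ / C ≠ 0 := by
    rintro hc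
    simp [hterm, hc] at hZ
  change _ = normalized (fun ω => powerDistortion ψ α p ω * powerSignal γ α (σ ω) θ) ω
  rw [bayes_eq_normalized, powerDistortion_normalized ψ α
    (fun ω => mul_nonneg (hp.1 ω) ((hσ ω).1 θ)) hS, normalized_eq_of_eq_mul hc hterm]

theorem GretherCoherent.congr {f f' : (Ω → ℝ) → Ω → ℝ} {g g' : Ω → (Θ → ℝ) → Θ → ℝ}
    (h : GretherCoherent f g) (hf : ∀ p, IsDist p → f p = f' p)
    (hg : ∀ ω s, IsDist s → g ω s = g' ω s) : GretherCoherent f' g' := by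
  intro p hp σ hσ θ hS hZ ω
  have hb : IsDist (bayes σ p θ) :=
    isDist_normalized (fun ω => mul_nonneg (hp.1 ω) ((hσ ω).1 θ)) hS
  simp only [← hf p hp, ← hf _ hb, ← hg _ _ (hσ _)] at hZ ⊢
  exact h p hp σ hσ θ hS hZ ω

end PowerDistortion

section TwoPoint

variable {Θ : Type*} [DecidableEq Θ]

noncomputable def twoPointDist (θ₀ θ₁ : Θ) (x : ℝ) : Θ → ℝ :=
  Pi.single θ₀ x + Pi.single θ₁ (1 - x)

theorem twoPointDist_apply_left {θ₀ θ₁ : Θ} (hθ : θ₀ ≠ θ₁) (x : ℝ) :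
    twoPointDist θ₀ θ₁ x θ₀ = x := by
  simp [twoPointDist, hθ]

theorem isDist_twoPointDist [Fintype Θ] {θ₀ θ₁ : Θ} (hθ : θ₀ ≠ θ₁) {x : ℝ} (hx₀ : 0 ≤ x)
    (hx₁ : x ≤ 1) : IsDist (twoPointDist θ₀ θ₁ x) := by
  refine ⟨fun θ => add_nonneg ?_ ?_, by simp [twoPointDist, Finset.sum_add_distrib]⟩
  · rcases eq_or_ne θ θ₀ with rfl | h <;> simp [*]
  · rcases eq_or_ne θ θ₁ with rfl | h <;> simp [*]

theorem continuous_twoPointDist (θ₀ θ₁ : Θ) : Continuous (twoPointDist θ₀ θ₁) := by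
  have h (θ : Θ) : Continuous fun x : ℝ => (Pi.single θ x : Θ → ℝ) :=
    continuous_single (A := fun _ => ℝ) θ
  exact (h θ₀).add ((h θ₁).comp (continuous_const.sub continuous_id))

end TwoPoint

section Forward

variable {Ω Θ : Type*} [Fintype Ω] [Fintype Θ] {f : (Ω → ℝ) → Ω → ℝ}
  {g : Ω → (Θ → ℝ) → Θ → ℝ}

theorem GretherCoherent.apply_normalized [Nonempty Ω] (hco : GretherCoherent f g)
    (hf : ∀ p, IsDist p → ∀ ω, 0 < p ω → 0 < f p ω)
    (hg : ∀ ω s, IsDist s → ∀ θ, 0 < s θ → 0 < g ω s θ)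
    {σ : Ω → Θ → ℝ} (hσ : ∀ ω, IsDist (σ ω)) {θ : Θ} (hσθ : ∀ ω, 0 < σ ω θ) :
    f (normalized fun ω => σ ω θ) =
      normalized fun ω => f (uniformDist Ω) ω * g ω (σ ω) θ := by
  rw [← bayes_uniformDist]
  refine funext (hco _ isDist_uniformDist σ hσ θ ?_ ?_)
  · exact Finset.sum_pos (fun ω _ => mul_pos (uniformDist_pos ω) (hσθ ω)) univ_nonempty
  · exact Finset.sum_pos (fun ω _ => mul_pos (hf _ isDist_uniformDist ω (uniformDist_pos ω))
      (hg ω _ (hσ ω) θ (hσθ ω))) univ_nonempty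

theorem GretherCoherent.signal_eq [Nonempty Ω] (hco : GretherCoherent f g)
    (hfmap : ∀ p, IsDist p → IsDist (f p)) (hf : ∀ p, IsDist p → ∀ ω, 0 < p ω → 0 < f p ω)
    (hg : ∀ ω s, IsDist s → ∀ θ, 0 < s θ → 0 < g ω s θ) {s : Θ → ℝ} (hs : IsDist s) {θ : Θ}
    (hsθ : 0 < s θ) (ω ω' : Ω) : g ω s θ = g ω' s θ := by
  set ψ := f (uniformDist Ω)
  have hψ (ω : Ω) : 0 < ψ ω := hf _ isDist_uniformDist ω (uniformDist_pos ω)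
  have hψ₁ : ∑ ω, ψ ω = 1 := (hfmap _ isDist_uniformDist).2
  have h := hco.apply_normalized hf hg (σ := fun _ => s) (fun _ => hs) fun _ => hsθ
  rw [normalized_const hsθ.ne'] at h
  have hc := mul_eq_mul_of_normalized_eq ((normalized_eq_self hψ₁).trans h) (by simp [hψ₁])
    (Finset.sum_pos (fun ω _ => mul_pos (hψ ω) (hg ω s hs θ hsθ)) univ_nonempty).ne' ω ω'
  exact mul_left_cancel₀ (mul_pos (hψ ω) (hψ ω')).ne' (by linear_combination -hc)

theorem GretherCoherent.apply_normalized_binary [Nonempty Ω] [DecidableEq Θ]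
    (hco : GretherCoherent f g) (hf : ∀ p, IsDist p → ∀ ω, 0 < p ω → 0 < f p ω)
    (hg : ∀ ω s, IsDist s → ∀ θ, 0 < s θ → 0 < g ω s θ) {θ₀ θ₁ : Θ} (hθ : θ₀ ≠ θ₁)
    {φ : ℝ → ℝ} (hφ : ∀ ω, ∀ x ∈ Ioc (0 : ℝ) 1, g ω (twoPointDist θ₀ θ₁ x) θ₀ = φ x)
    {t : Ω → ℝ} (ht : ∀ ω, t ω ∈ Ioc (0 : ℝ) 1) :
    f (normalized t) = normalized fun ω => f (uniformDist Ω) ω * φ (t ω) := by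
  have h := hco.apply_normalized hf hg (σ := fun ω => twoPointDist θ₀ θ₁ (t ω)) (θ := θ₀)
    (fun ω => isDist_twoPointDist hθ (ht ω).1.le (ht ω).2)
    (fun ω => (twoPointDist_apply_left hθ (t ω)).symm ▸ (ht ω).1)
  simpa only [twoPointDist_apply_left hθ, hφ _ _ (ht _)] using h

theorem GretherCoherent.binary_mul [Nontrivial Ω] [DecidableEq Θ] (hco : GretherCoherent f g)
    (hf : ∀ p, IsDist p → ∀ ω, 0 < p ω → 0 < f p ω)
    (hg : ∀ ω s, IsDist s → ∀ θ, 0 < s θ → 0 < g ω s θ) {θ₀ θ₁ : Θ} (hθ : θ₀ ≠ θ₁)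
    {φ : ℝ → ℝ} (hφ : ∀ ω, ∀ x ∈ Ioc (0 : ℝ) 1, g ω (twoPointDist θ₀ θ₁ x) θ₀ = φ x)
    {x y : ℝ} (hx : x ∈ Ioc (0 : ℝ) 1) (hy : y ∈ Ioc (0 : ℝ) 1) :
    φ (x * y) * φ 1 = φ x * φ y := by
  classical
  obtain ⟨ω₁, ω₂, h₁₂⟩ := exists_pair_ne Ω
  set ψ := f (uniformDist Ω)
  have hψ (ω : Ω) : 0 < ψ ω := hf _ isDist_uniformDist ω (uniformDist_pos ω)
  have hφpos (z : ℝ) (hz : z ∈ Ioc (0 : ℝ) 1) : 0 < φ z := hφ ω₁ z hz ▸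
    hg ω₁ _ (isDist_twoPointDist hθ hz.1.le hz.2) θ₀ ((twoPointDist_apply_left hθ z).symm ▸ hz.1)
  have hsum {t : Ω → ℝ} (ht : ∀ ω, t ω ∈ Ioc (0 : ℝ) 1) : ∑ ω, ψ ω * φ (t ω) ≠ 0 :=
    (Finset.sum_pos (fun ω _ => mul_pos (hψ ω) (hφpos _ (ht ω))) univ_nonempty).ne'
  let t : Ω → ℝ := Function.update (fun _ => 1) ω₁ y
  have ht (ω : Ω) : t ω ∈ Ioc (0 : ℝ) 1 := by
    rcases eq_or_ne ω ω₁ with rfl | h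
    · simpa [t] using hy
    · simp [t, h]
  have hxt (ω : Ω) : x * t ω ∈ Ioc (0 : ℝ) 1 :=
    ⟨mul_pos hx.1 (ht ω).1, mul_le_one₀ hx.2 (ht ω).1.le (ht ω).2⟩
  have h := (hco.apply_normalized_binary hf hg hθ hφ hxt).symm.trans
    ((congrArg f (normalized_eq_of_eq_mul hx.1.ne' fun ω => rfl)).trans
      (hco.apply_normalized_binary hf hg hθ hφ ht))
  have hc := mul_eq_mul_of_normalized_eq h (hsum hxt) (hsum ht) ω₁ ω₂
  simp only [t, Function.update_self, Function.update_of_ne h₁₂.symm, mul_one] at hc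
  exact mul_left_cancel₀ (mul_pos (hψ ω₁) (hψ ω₂)).ne' (by linear_combination hc)

theorem GretherCoherent.exists_rpow_binary [Nontrivial Ω] [DecidableEq Θ]
    (hco : GretherCoherent f g) (hfmap : ∀ p, IsDist p → IsDist (f p))
    (hf : ∀ p, IsDist p → ∀ ω, 0 < p ω → 0 < f p ω)
    (hg : ∀ ω s, IsDist s → ∀ θ, 0 < s θ → 0 < g ω s θ)
    (hgpos : ∀ ω s, IsDist s → ∀ θ, (g ω s θ = 0 ↔ s θ = 0))
    (hgcont : ∀ ω, ContinuousOn (g ω) {s | IsDist s}) {θ₀ θ₁ : Θ} (hθ : θ₀ ≠ θ₁) :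
    ∃ c α : ℝ, 0 < c ∧ 0 < α ∧
      ∀ ω, ∀ x ∈ Ioc (0 : ℝ) 1, g ω (twoPointDist θ₀ θ₁ x) θ₀ = c * x ^ α := by
  obtain ⟨ω₀⟩ : Nonempty Ω := inferInstance
  set φ : ℝ → ℝ := fun x => g ω₀ (twoPointDist θ₀ θ₁ x) θ₀
  have hφ (ω : Ω) (x : ℝ) (hx : x ∈ Ioc (0 : ℝ) 1) : g ω (twoPointDist θ₀ θ₁ x) θ₀ = φ x :=
    hco.signal_eq hfmap hf hg (isDist_twoPointDist hθ hx.1.le hx.2)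
      ((twoPointDist_apply_left hθ x).symm ▸ hx.1) ω ω₀
  have hφpos (x : ℝ) (hx : x ∈ Ioc (0 : ℝ) 1) : 0 < φ x :=
    hg ω₀ _ (isDist_twoPointDist hθ hx.1.le hx.2) θ₀ ((twoPointDist_apply_left hθ x).symm ▸ hx.1)
  have hφ0 : φ 0 = 0 :=
    (hgpos ω₀ _ (isDist_twoPointDist hθ le_rfl zero_le_one) θ₀).2 (twoPointDist_apply_left hθ 0)
  have hφc : ContinuousOn φ (Icc 0 1) := (continuous_apply θ₀).comp_continuousOn
    ((hgcont ω₀).comp (continuous_twoPointDist θ₀ θ₁).continuousOn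
      fun x hx => isDist_twoPointDist hθ hx.1 hx.2)
  obtain ⟨α, hα, hφα⟩ := exists_pos_rpow_of_mul_eq_mul hφc hφpos hφ0
    fun x hx y hy => hco.binary_mul hf hg hθ hφ hx hy
  exact ⟨φ 1, α, hφpos 1 ⟨one_pos, le_rfl⟩, hα, fun ω x hx => (hφ ω x hx).trans (hφα x hx)⟩

theorem GretherCoherent.eq_powerDistortion_of_pos [Nonempty Ω] [DecidableEq Θ]
    (hco : GretherCoherent f g) (hf : ∀ p, IsDist p → ∀ ω, 0 < p ω → 0 < f p ω)
    (hg : ∀ ω s, IsDist s → ∀ θ, 0 < s θ → 0 < g ω s θ) {θ₀ θ₁ : Θ} (hθ : θ₀ ≠ θ₁)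
    {c α : ℝ} (hc : c ≠ 0)
    (hφ : ∀ ω, ∀ x ∈ Ioc (0 : ℝ) 1, g ω (twoPointDist θ₀ θ₁ x) θ₀ = c * x ^ α)
    {q : Ω → ℝ} (hq : IsDist q) (hqpos : ∀ ω, 0 < q ω) :
    f q = powerDistortion (f (uniformDist Ω)) α q := by
  have h := hco.apply_normalized_binary hf hg hθ (φ := fun x => c * x ^ α) hφ (t := q)
    fun ω => ⟨hqpos ω, hq.le_one ω⟩
  rw [normalized_eq_self hq.2] at h
  exact h.trans (normalized_eq_of_eq_mul hc fun ω => by ring)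

theorem GretherCoherent.signal_mul_rpow [Nontrivial Ω] (hco : GretherCoherent f g)
    (hfmap : ∀ p, IsDist p → IsDist (f p)) (hf : ∀ p, IsDist p → ∀ ω, 0 < p ω → 0 < f p ω)
    (hg : ∀ ω s, IsDist s → ∀ θ, 0 < s θ → 0 < g ω s θ)
    (hgpos : ∀ ω s, IsDist s → ∀ θ, (g ω s θ = 0 ↔ s θ = 0)) {α : ℝ} (hα : 0 < α)
    (hff : ∀ p, IsDist p → f p = powerDistortion (f (uniformDist Ω)) α p)
    {s : Θ → ℝ} (hs : IsDist s) (θ : Θ) (ω ω₀ : Ω) :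
    g ω s θ * uniformDist Θ θ ^ α = g ω₀ (uniformDist Θ) θ * s θ ^ α := by
  classical
  rcases (hs.1 θ).eq_or_lt with hsθ | hsθ
  · rw [(hgpos ω s hs θ).2 hsθ.symm, ← hsθ, zero_rpow hα.ne', zero_mul, mul_zero]
  have : Nonempty Θ := ⟨θ⟩
  obtain ⟨ω', hω'⟩ := exists_ne ω
  set ψ := f (uniformDist Ω)
  have hψ (ω : Ω) : 0 < ψ ω := hf _ isDist_uniformDist ω (uniformDist_pos ω)
  let σ : Ω → Θ → ℝ := Function.update (fun _ => uniformDist Θ) ω s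
  have hσ (ω' : Ω) : IsDist (σ ω') := by
    rcases eq_or_ne ω' ω with rfl | h
    · simpa [σ] using hs
    · simpa [σ, h] using isDist_uniformDist
  have hσθ (ω' : Ω) : 0 < σ ω' θ := by
    rcases eq_or_ne ω' ω with rfl | h
    · simpa [σ] using hsθ
    · simpa [σ, h] using uniformDist_pos θ
  have hS : 0 < ∑ ω, σ ω θ := Finset.sum_pos (fun ω _ => hσθ ω) univ_nonempty
  have h := hco.apply_normalized hf hg hσ hσθ
  rw [hff _ (isDist_normalized (fun ω => (hσθ ω).le) hS),
    powerDistortion_normalized _ _ (fun ω => (hσθ ω).le) hS] at h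
  have hc := mul_eq_mul_of_normalized_eq h
    (Finset.sum_pos (fun ω _ => mul_pos (hψ ω) (rpow_pos_of_pos (hσθ ω) α)) univ_nonempty).ne'
    (Finset.sum_pos (fun ω _ => mul_pos (hψ ω) (hg ω _ (hσ ω) θ (hσθ ω))) univ_nonempty).ne'
    ω ω'
  simp only [σ, Function.update_self, Function.update_of_ne hω'] at hc
  rw [← hco.signal_eq hfmap hf hg isDist_uniformDist (uniformDist_pos θ) ω' ω₀]
  exact mul_left_cancel₀ (mul_pos (hψ ω) (hψ ω')).ne' (by linear_combination -hc)

theorem GretherCoherent.exists_powerDistortion [Nontrivial Ω] [Nontrivial Θ]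
    (hco : GretherCoherent f g) (hfmap : ∀ p, IsDist p → IsDist (f p))
    (hgnn : ∀ ω s, IsDist s → ∀ θ, 0 ≤ g ω s θ)
    (hfpos : ∀ p, IsDist p → ∀ ω, (f p ω = 0 ↔ p ω = 0)) (hfcont : ContinuousOn f {p | IsDist p})
    (hgpos : ∀ ω s, IsDist s → ∀ θ, (g ω s θ = 0 ↔ s θ = 0))
    (hgcont : ∀ ω, ContinuousOn (g ω) {s | IsDist s}) :
    ∃ (ψ : Ω → ℝ) (γ : Θ → ℝ) (α : ℝ), (∀ ω, 0 < ψ ω) ∧ (∀ θ, 0 < γ θ) ∧ 0 < α ∧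
      (∀ p, IsDist p → f p = powerDistortion ψ α p) ∧
      ∀ ω s, IsDist s → g ω s = powerSignal γ α s := by
  classical
  obtain ⟨θ₀, θ₁, hθ⟩ := exists_pair_ne Θ
  obtain ⟨ω₀⟩ : Nonempty Ω := inferInstance
  have hf (p : Ω → ℝ) (hp : IsDist p) (ω : Ω) (h : 0 < p ω) : 0 < f p ω :=
    ((hfmap p hp).1 ω).lt_of_ne' fun h0 => h.ne' ((hfpos p hp ω).1 h0)
  have hg (ω : Ω) (s : Θ → ℝ) (hs : IsDist s) (θ : Θ) (h : 0 < s θ) : 0 < g ω s θ :=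
    (hgnn ω s hs θ).lt_of_ne' fun h0 => h.ne' ((hgpos ω s hs θ).1 h0)
  have hψ (ω : Ω) : 0 < f (uniformDist Ω) ω := hf _ isDist_uniformDist ω (uniformDist_pos ω)
  obtain ⟨c, α, hc, hα, hφ⟩ := hco.exists_rpow_binary hfmap hf hg hgpos hgcont hθ
  have hff (p : Ω → ℝ) (hp : IsDist p) : f p = powerDistortion (f (uniformDist Ω)) α p :=
    hp.eq_of_continuousOn_of_pos hfcont (continuousOn_powerDistortion hψ hα.le)
      fun q hq hqpos => hco.eq_powerDistortion_of_pos hf hg hθ hc.ne' hφ hq hqpos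
  have hu (θ : Θ) : 0 < uniformDist Θ θ ^ α := rpow_pos_of_pos (uniformDist_pos θ) α
  refine ⟨f (uniformDist Ω), fun θ => g ω₀ (uniformDist Θ) θ / uniformDist Θ θ ^ α, α, hψ,
    fun θ => div_pos (hg _ _ isDist_uniformDist θ (uniformDist_pos θ)) (hu θ), hα, hff,
    fun ω s hs => funext fun θ => ?_⟩
  rw [powerSignal, div_mul_eq_mul_div, ← hco.signal_mul_rpow hfmap hf hg hgpos hα hff hs θ ω ω₀,
    mul_div_cancel_right₀ _ (hu θ).ne']

end Forward

/-- **Theorem (Grether)**: for `|Ω| ≥ 3` and `|Θ| ≥ 2`, `f` and all `g_ω` are positive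
and continuous and `(f,g)` is Gretherian-coherent iff there are `ψ : Ω → ℝ₊₊`,
`γ : Θ → ℝ₊₊` and `α > 0` with `f(p)(ω) = ψ(ω)p(ω)^α / Σ ψ(ω')p(ω')^α` and
`g_ω(σ(·|ω))(θ) = γ(θ)σ(θ|ω)^α`. -/
theorem stmt6 {Ω Θ : Type*} [Fintype Ω] [Fintype Θ]
    (hΩ : 3 ≤ Fintype.card Ω) (hΘ : 2 ≤ Fintype.card Θ)
    (f : (Ω → ℝ) → Ω → ℝ) (hfmap : ∀ p, IsDist p → IsDist (f p))
    (g : Ω → (Θ → ℝ) → Θ → ℝ)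
    (hgnn : ∀ (ω : Ω) σ, IsDist σ → ∀ θ, 0 ≤ g ω σ θ) :
    ((∀ p, IsDist p → ∀ ω, (f p ω = 0 ↔ p ω = 0)) ∧
      ContinuousOn f {p | IsDist p} ∧
      (∀ ω : Ω, (∀ σ, IsDist σ → ∀ θ, (g ω σ θ = 0 ↔ σ θ = 0)) ∧
        ContinuousOn (g ω) {σ | IsDist σ}) ∧
      GretherCoherent f g) ↔
    ∃ (ψ : Ω → ℝ) (γ : Θ → ℝ) (α : ℝ),
      (∀ ω, 0 < ψ ω) ∧ (∀ θ, 0 < γ θ) ∧ 0 < α ∧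
      (∀ p, IsDist p → ∀ ω,
        f p ω = ψ ω * p ω ^ α / ∑ ω', ψ ω' * p ω' ^ α) ∧
      (∀ σ : Ω → Θ → ℝ, (∀ ω, IsDist (σ ω)) → ∀ ω θ,
        g ω (σ ω) θ = γ θ * σ ω θ ^ α) := by
  have : Nontrivial Ω := Fintype.one_lt_card_iff_nontrivial.1 (by omega)
  have : Nontrivial Θ := Fintype.one_lt_card_iff_nontrivial.1 (by omega)
  constructor
  · rintro ⟨hfpos, hfcont, hg, hco⟩
    obtain ⟨ψ, γ, α, hψ, hγ, hα, hf, hg⟩ := hco.exists_powerDistortion hfmap hgnn hfpos hfcont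
      (fun ω => (hg ω).1) fun ω => (hg ω).2
    exact ⟨ψ, γ, α, hψ, hγ, hα, fun p hp => congrFun (hf p hp),
      fun σ hσ ω => congrFun (hg ω _ (hσ ω))⟩
  · rintro ⟨ψ, γ, α, hψ, hγ, hα, hf, hg⟩
    have hf' (p : Ω → ℝ) (hp : IsDist p) : powerDistortion ψ α p = f p :=
      funext fun ω => (hf p hp ω).symm
    have hg' (ω : Ω) (s : Θ → ℝ) (hs : IsDist s) : powerSignal γ α s = g ω s :=
      funext fun θ => (hg (fun _ => s) (fun _ => hs) ω θ).symm
    refine ⟨fun p hp => hf' p hp ▸ powerDistortion_eq_zero_iff hψ hα hp,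
      (continuousOn_powerDistortion hψ hα.le).congr fun p hp => (hf' p hp).symm,
      fun ω => ⟨fun s hs => hg' ω s hs ▸ powerSignal_eq_zero_iff hγ hα hs,
        (continuous_powerSignal γ hα.le).continuousOn.congr fun s hs => (hg' ω s hs).symm⟩,
      (gretherCoherent_powerDistortion ψ γ α).congr hf' hg'⟩
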